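/- There exist constants 0 < c ≤ C such that for every λ ∈ (0, 1/2], c log(1/λ) ≤ ∫_{[0,1]²} (λ + ζ₂(p))^{−1} dp ≤ C log(1/λ). (Two-sided logarithmic asymptotics of I_λ in dimension two.) -/

import Mathlib

open MeasureTheory Real

noncomputable section

/-- The unit cube `[0,1]^d ⊂ ℝ^d`. -/
def cube (d : ℕ) : Set (Fin d → ℝ) := Set.univ.pi fun _ => Set.Icc 0 1

/-- The symbol `ζ_d(p) = 1 − (1/d) Σ_{j=1}^d cos(2π p_j)`. -/
def zeta (d : ℕ) (p : Fin d → ℝ) : ℝ :=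
  1 - (1 / (d : ℝ)) * ∑ j, Real.cos (2 * π * p j)

namespace Ilam

lemma zeta_two (p : Fin 2 → ℝ) :
    zeta 2 p = Real.sin (π * p 0) ^ 2 + Real.sin (π * p 1) ^ 2 := by
  unfold zeta
  rw [Fin.sum_univ_two]
  have h0 : (2:ℝ) * π * p 0 = 2 * (π * p 0) := by ring
  have h1 : (2:ℝ) * π * p 1 = 2 * (π * p 1) := by ring
  rw [h0, h1, Real.cos_two_mul, Real.cos_two_mul]
  have c0 := Real.sin_sq_add_cos_sq (π * p 0)
  have c1 := Real.sin_sq_add_cos_sq (π * p 1)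
  push_cast
  nlinarith [c0, c1]

-- FTC: ∫₀¹ (b+kx)⁻¹
lemma integral_inv_linear (b k : ℝ) (hb : 0 < b) (hk : 0 < k) :
    ∫ x in (0:ℝ)..1, (b + k * x)⁻¹ = (Real.log (b + k) - Real.log b) / k := by
  have hpos : ∀ x ∈ Set.uIcc (0:ℝ) 1, 0 < b + k * x := by
    intro x hx
    rw [Set.uIcc_of_le (by norm_num)] at hx
    nlinarith [hx.1]
  have hderiv : ∀ x ∈ Set.uIcc (0:ℝ) 1,
      HasDerivAt (fun x => Real.log (b + k * x) / k) ((b + k * x)⁻¹) x := by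
    intro x hx
    have h1 : HasDerivAt (fun x : ℝ => b + k * x) k x := by
      simpa using ((hasDerivAt_id x).const_mul k).const_add b
    have h2 := (Real.hasDerivAt_log (hpos x hx).ne').comp x h1
    have h3 := h2.div_const k
    rwa [mul_div_cancel_right₀ _ hk.ne'] at h3
  have hcont : ContinuousOn (fun x : ℝ => (b + k * x)⁻¹) (Set.uIcc 0 1) := by
    apply ContinuousOn.inv₀
    · fun_prop
    · intro x hx; exact (hpos x hx).ne'
  rw [intervalIntegral.integral_eq_sub_of_hasDerivAt hderiv
    (hcont.intervalIntegrable)]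
  simp
  ring

lemma integral_inv_linear' (b k : ℝ) (hb : 0 < b) (hk : 0 < k) :
    ∫ x in (0:ℝ)..1, (b + k * (1 - x))⁻¹ = (Real.log (b + k) - Real.log b) / k := by
  have := intervalIntegral.integral_comp_sub_left (a := (0:ℝ)) (b := 1)
    (fun t => (b + k * t)⁻¹) 1
  simp only [sub_self, sub_zero] at this
  rw [this]
  exact integral_inv_linear b k hb hk

-- FTC: ∫₀¹ ((b+2y)²)⁻¹
lemma integral_inv_sq (b : ℝ) (hb : 0 < b) :
    ∫ y in (0:ℝ)..1, ((b + 2 * y) ^ 2)⁻¹ = (b⁻¹ - (b + 2)⁻¹) / 2 := by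
  have hpos : ∀ y ∈ Set.uIcc (0:ℝ) 1, 0 < b + 2 * y := by
    intro y hy
    rw [Set.uIcc_of_le (by norm_num)] at hy
    nlinarith [hy.1]
  have hderiv : ∀ y ∈ Set.uIcc (0:ℝ) 1,
      HasDerivAt (fun y => -(b + 2 * y)⁻¹ / 2) (((b + 2 * y) ^ 2)⁻¹) y := by
    intro y hy
    have h1 : HasDerivAt (fun y : ℝ => b + 2 * y) 2 y := by
      simpa using ((hasDerivAt_id y).const_mul 2).const_add b
    have h2 := (h1.inv (hpos y hy).ne').neg.div_const 2
    have hX : ((b + 2 * y) ^ 2) ≠ 0 := (pow_pos (hpos y hy) 2).ne'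
    have he : -(-2 / (b + 2 * y) ^ 2) / 2 = ((b + 2 * y) ^ 2)⁻¹ := by
      field_simp
    rwa [he] at h2
  have hcont : ContinuousOn (fun y : ℝ => ((b + 2 * y) ^ 2)⁻¹) (Set.uIcc 0 1) := by
    apply ContinuousOn.inv₀
    · fun_prop
    · intro y hy; exact (pow_pos (hpos y hy) 2).ne'
  rw [intervalIntegral.integral_eq_sub_of_hasDerivAt hderiv hcont.intervalIntegrable]
  norm_num
  ring

lemma integral_inv_sq' (b : ℝ) (hb : 0 < b) :
    ∫ y in (0:ℝ)..1, ((b + 2 * (1 - y)) ^ 2)⁻¹ = (b⁻¹ - (b + 2)⁻¹) / 2 := by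
  have := intervalIntegral.integral_comp_sub_left (a := (0:ℝ)) (b := 1)
    (fun t => ((b + 2 * t) ^ 2)⁻¹) 1
  simp only [sub_self, sub_zero] at this
  rw [this]
  exact integral_inv_sq b hb

-- sin bound from below
lemma two_min_le_sin {x : ℝ} (hx : x ∈ Set.Icc (0:ℝ) 1) :
    2 * min x (1 - x) ≤ Real.sin (π * x) := by
  obtain ⟨hx0, hx1⟩ := hx
  rcases le_total x (1/2) with h | h
  · rw [min_eq_left (by linarith)]
    have := Real.mul_le_sin (x := π * x) (by positivity)
      (by nlinarith [Real.pi_pos])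
    calc 2 * x = 2 / π * (π * x) := by field_simp
    _ ≤ Real.sin (π * x) := this
  · rw [min_eq_right (by linarith)]
    have hs : Real.sin (π * x) = Real.sin (π * (1 - x)) := by
      rw [show π * (1 - x) = π - π * x by ring, Real.sin_pi_sub]
    rw [hs]
    have := Real.mul_le_sin (x := π * (1 - x)) (by nlinarith [Real.pi_pos])
      (by nlinarith [Real.pi_pos])
    calc 2 * (1 - x) = 2 / π * (π * (1 - x)) := by field_simp
    _ ≤ Real.sin (π * (1 - x)) := this

end Ilam

namespace Ilam

lemma cube_eq :
    cube 2 = (MeasurableEquiv.piFinTwo (fun _ : Fin 2 => ℝ)) ⁻¹'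
      (Set.Icc (0:ℝ) 1 ×ˢ Set.Icc (0:ℝ) 1) := by
  ext p
  simp only [cube, Set.mem_preimage, MeasurableEquiv.piFinTwo_apply, Set.mem_pi,
    Set.mem_univ, forall_true_left, Set.mem_prod, Set.mem_Icc, Fin.forall_fin_two,
    Prod.fst, Prod.snd]

lemma integral_cube (g : ℝ × ℝ → ℝ) :
    ∫ p in cube 2, g (p 0, p 1) = ∫ z in Set.Icc (0:ℝ) 1 ×ˢ Set.Icc (0:ℝ) 1, g z := by
  rw [cube_eq]
  exact (volume_preserving_piFinTwo (fun _ : Fin 2 => ℝ)).setIntegral_preimage_emb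
    (MeasurableEquiv.measurableEmbedding _) g _

end Ilam

namespace Ilam

def Q : Set (ℝ × ℝ) := Set.Icc (0:ℝ) 1 ×ˢ Set.Icc (0:ℝ) 1

lemma hQm : MeasurableSet Q := measurableSet_Icc.prod measurableSet_Icc
lemma hQc : IsCompact Q := isCompact_Icc.prod isCompact_Icc

def F (lam : ℝ) (z : ℝ × ℝ) : ℝ :=
  (lam + (Real.sin (π * z.1) ^ 2 + Real.sin (π * z.2) ^ 2))⁻¹

def mm (x : ℝ) : ℝ := min x (1 - x)

def B (lam : ℝ) (x : ℝ) : ℝ := Real.sqrt (lam + 4 * mm x ^ 2)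

def G (lam : ℝ) (z : ℝ × ℝ) : ℝ :=
  2 * (((B lam z.1 + 2 * z.2) ^ 2)⁻¹ + ((B lam z.1 + 2 * (1 - z.2)) ^ 2)⁻¹)

variable {lam : ℝ}

lemma F_den_pos (hl0 : 0 < lam) (z : ℝ × ℝ) :
    0 < lam + (Real.sin (π * z.1) ^ 2 + Real.sin (π * z.2) ^ 2) := by positivity

lemma F_cont (hl0 : 0 < lam) : Continuous (F lam) := by
  apply Continuous.inv₀
  · fun_prop
  · exact fun z => (F_den_pos hl0 z).ne'

lemma F_int (hl0 : 0 < lam) : IntegrableOn (F lam) Q :=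
  (F_cont hl0).continuousOn.integrableOn_compact hQc

lemma mm_cont : Continuous mm := continuous_id.min (continuous_const.sub continuous_id)

lemma B_pos (hl0 : 0 < lam) (x : ℝ) : 0 < B lam x :=
  Real.sqrt_pos.2 (by positivity)

lemma B_sq (hl0 : 0 < lam) (x : ℝ) : B lam x ^ 2 = lam + 4 * mm x ^ 2 :=
  Real.sq_sqrt (by positivity)

lemma B_cont : Continuous (B lam) :=
  Real.continuous_sqrt.comp (continuous_const.add (continuous_const.mul (mm_cont.pow 2)))

lemma G_cont_on (hl0 : 0 < lam) : ContinuousOn (G lam) Q := by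
  have h1 : ∀ z ∈ Q, (B lam z.1 + 2 * z.2) ^ 2 ≠ 0 := by
    rintro z ⟨_, hz2, _⟩
    have := B_pos hl0 z.1
    positivity
  have h2 : ∀ z ∈ Q, (B lam z.1 + 2 * (1 - z.2)) ^ 2 ≠ 0 := by
    rintro z ⟨_, _, hz2⟩
    have h3 := B_pos hl0 z.1
    have : (0:ℝ) ≤ 1 - z.2 := by linarith
    positivity
  apply ContinuousOn.mul continuousOn_const
  apply ContinuousOn.add
  · exact ContinuousOn.inv₀
      (((B_cont.comp continuous_fst).add (continuous_const.mul continuous_snd)).pow 2).continuousOn h1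
  · exact ContinuousOn.inv₀
      (((B_cont.comp continuous_fst).add
        (continuous_const.mul (continuous_const.sub continuous_snd))).pow 2).continuousOn h2

lemma G_int (hl0 : 0 < lam) : IntegrableOn (G lam) Q :=
  (G_cont_on hl0).integrableOn_compact hQc

end Ilam

namespace Ilam
variable {lam : ℝ}

lemma F_le_G (hl0 : 0 < lam) {z : ℝ × ℝ} (hz : z ∈ Q) : F lam z ≤ G lam z := by
  obtain ⟨hz1, hz2⟩ := hz
  obtain ⟨hx0, hx1⟩ := hz1
  obtain ⟨hy0, hy1⟩ := hz2
  set x := z.1; set y := z.2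
  have hsx : 2 * mm x ≤ Real.sin (π * x) := two_min_le_sin ⟨hx0, hx1⟩
  have hsy : 2 * mm y ≤ Real.sin (π * y) := two_min_le_sin ⟨hy0, hy1⟩
  have hmx0 : 0 ≤ mm x := le_min hx0 (by linarith)
  have hmy0 : 0 ≤ mm y := le_min hy0 (by linarith)
  have hb := B_pos hl0 x
  have hbsq := B_sq hl0 x
  -- denominator bound
  have hD : (B lam x + 2 * mm y) ^ 2 ≤
      2 * (lam + (Real.sin (π * x) ^ 2 + Real.sin (π * y) ^ 2)) := by
    nlinarith [sq_nonneg (B lam x - 2 * mm y), sq_nonneg (Real.sin (π * x)),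
      sq_nonneg (Real.sin (π * y))]
  have hD0 := F_den_pos hl0 z
  have key : F lam z ≤ 2 * ((B lam x + 2 * mm y) ^ 2)⁻¹ := by
    rw [F]
    have h1 : 0 < (B lam x + 2 * mm y) ^ 2 := by positivity
    rw [show (2:ℝ) * ((B lam x + 2 * mm y) ^ 2)⁻¹ = ((B lam x + 2 * mm y) ^ 2 / 2)⁻¹ by
      rw [div_eq_mul_inv, mul_inv, inv_inv]; ring]
    apply inv_anti₀
    · positivity
    · linarith
  refine key.trans ?_
  rw [G]
  rcases min_choice y (1 - y) with h | h
  · have : mm y = y := h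
    rw [this]
    have h2 : (0:ℝ) ≤ ((B lam x + 2 * (1 - y)) ^ 2)⁻¹ := by positivity
    nlinarith
  · have : mm y = 1 - y := h
    rw [this]
    have h2 : (0:ℝ) ≤ ((B lam x + 2 * y) ^ 2)⁻¹ := by positivity
    nlinarith

lemma G_inner (hl0 : 0 < lam) (x : ℝ) :
    ∫ y in Set.Icc (0:ℝ) 1, G lam (x, y) =
      2 * ((B lam x)⁻¹ - (B lam x + 2)⁻¹) := by
  have hb := B_pos hl0 x
  rw [MeasureTheory.integral_Icc_eq_integral_Ioc,
    ← intervalIntegral.integral_of_le (zero_le_one)]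
  have hi1 : IntervalIntegrable (fun y : ℝ => ((B lam x + 2 * y) ^ 2)⁻¹)
      volume 0 1 := by
    apply ContinuousOn.intervalIntegrable
    apply ContinuousOn.inv₀ (by fun_prop)
    intro y hy
    rw [Set.uIcc_of_le zero_le_one] at hy
    have := hy.1
    positivity
  have hi2 : IntervalIntegrable (fun y : ℝ => ((B lam x + 2 * (1 - y)) ^ 2)⁻¹)
      volume 0 1 := by
    apply ContinuousOn.intervalIntegrable
    apply ContinuousOn.inv₀ (by fun_prop)
    intro y hy
    rw [Set.uIcc_of_le zero_le_one] at hy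
    have h1 := hy.2
    have : (0:ℝ) ≤ 1 - y := by linarith
    positivity
  rw [show (fun y : ℝ => G lam (x, y)) = fun y : ℝ =>
      2 * (((B lam x + 2 * y) ^ 2)⁻¹ + ((B lam x + 2 * (1 - y)) ^ 2)⁻¹) from rfl]
  rw [intervalIntegral.integral_const_mul, intervalIntegral.integral_add hi1 hi2,
    integral_inv_sq _ hb, integral_inv_sq' _ hb]
  ring

end Ilam

namespace Ilam
variable {lam : ℝ}

lemma upper (hl0 : 0 < lam) (hl2 : lam ≤ 1 / 2) :
    ∫ z in Q, F lam z ≤ 10 * Real.log (1 / lam) := by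
  set s := Real.sqrt lam with hsdef
  have hs0 : 0 < s := Real.sqrt_pos.2 hl0
  have hs2 : s ^ 2 = lam := Real.sq_sqrt hl0.le
  have hs1 : s ≤ 1 := by
    rw [hsdef, show (1:ℝ) = Real.sqrt 1 by simp]
    exact Real.sqrt_le_sqrt (by linarith)
  have step1 : ∫ z in Q, F lam z ≤ ∫ z in Q, G lam z :=
    setIntegral_mono_on (F_int hl0) (G_int hl0) hQm (fun z hz => F_le_G hl0 hz)
  have hGint' : IntegrableOn (G lam) (Set.Icc (0:ℝ) 1 ×ˢ Set.Icc (0:ℝ) 1)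
      ((volume : Measure ℝ).prod volume) := by
    exact G_int hl0
  have step2 : ∫ z in Q, G lam z
      = ∫ x in Set.Icc (0:ℝ) 1, ∫ y in Set.Icc (0:ℝ) 1, G lam (x, y) := by
    rw [Q]
    exact setIntegral_prod _ hGint'
  have step2' : ∫ z in Q, G lam z
      = ∫ x in Set.Icc (0:ℝ) 1, 2 * ((B lam x)⁻¹ - (B lam x + 2)⁻¹) := by
    rw [step2]
    congr 1
    funext x
    exact G_inner hl0 x
  have step3 : ∫ x in Set.Icc (0:ℝ) 1, 2 * ((B lam x)⁻¹ - (B lam x + 2)⁻¹)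
      ≤ ∫ x in Set.Icc (0:ℝ) 1,
          2 * Real.sqrt 2 * ((s + 2*x)⁻¹ + (s + 2*(1-x))⁻¹) := by
    apply setIntegral_mono_on
    · apply ContinuousOn.integrableOn_compact isCompact_Icc
      apply Continuous.continuousOn
      apply continuous_const.mul
      apply Continuous.sub
      · exact B_cont.inv₀ (fun x => (B_pos hl0 x).ne')
      · exact (B_cont.add continuous_const).inv₀
          (fun x => by have := B_pos hl0 x; show B lam x + 2 ≠ 0; exact ne_of_gt (by linarith))
    · apply ContinuousOn.integrableOn_compact isCompact_Icc
      apply ContinuousOn.mul continuousOn_const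
      apply ContinuousOn.add
      · apply ContinuousOn.inv₀ (by fun_prop)
        intro x hx
        have := hx.1
        positivity
      · apply ContinuousOn.inv₀ (by fun_prop)
        intro x hx
        have h1 := hx.2
        have : (0:ℝ) ≤ 1 - x := by linarith
        positivity
    · exact measurableSet_Icc
    · intro x hx
      obtain ⟨hx0, hx1⟩ := hx
      have hb := B_pos hl0 x
      have hbsq := B_sq hl0 x
      have hmx0 : 0 ≤ mm x := le_min hx0 (by linarith)
      have h1 : (s + 2 * mm x) / Real.sqrt 2 ≤ B lam x := by
        have h2 : ((s + 2 * mm x) / Real.sqrt 2) ^ 2 ≤ lam + 4 * mm x ^ 2 := by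
          rw [div_pow, Real.sq_sqrt (by norm_num : (0:ℝ) ≤ 2)]
          nlinarith [sq_nonneg (s - 2 * mm x)]
        exact Real.le_sqrt_of_sq_le h2
      have h2 : (B lam x)⁻¹ ≤ Real.sqrt 2 * (s + 2 * mm x)⁻¹ := by
        have hsm : 0 < s + 2 * mm x := by positivity
        have hsq2 : 0 < Real.sqrt 2 := Real.sqrt_pos.2 (by norm_num)
        have := inv_anti₀ (by positivity : 0 < (s + 2 * mm x) / Real.sqrt 2) h1
        rwa [inv_div, div_eq_mul_inv] at this
      have h3 : (s + 2 * mm x)⁻¹ ≤ (s + 2*x)⁻¹ + (s + 2*(1-x))⁻¹ := by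
        rcases min_choice x (1 - x) with h | h
        · rw [show mm x = x from h]
          have h9 : (0:ℝ) ≤ 1 - x := by linarith
          have : (0:ℝ) ≤ (s + 2*(1-x))⁻¹ := by positivity
          linarith
        · rw [show mm x = 1 - x from h]
          have : (0:ℝ) ≤ (s + 2*x)⁻¹ := by positivity
          linarith
      have h4 : (0:ℝ) ≤ (B lam x + 2)⁻¹ := by positivity
      have h5 : (0:ℝ) ≤ Real.sqrt 2 := Real.sqrt_nonneg 2
      nlinarith [mul_le_mul_of_nonneg_left h3 h5]
  have step4 : ∫ x in Set.Icc (0:ℝ) 1,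
      2 * Real.sqrt 2 * ((s + 2*x)⁻¹ + (s + 2*(1-x))⁻¹)
      = 2 * Real.sqrt 2 * (Real.log (s + 2) - Real.log s) := by
    rw [MeasureTheory.integral_Icc_eq_integral_Ioc,
      ← intervalIntegral.integral_of_le zero_le_one]
    have hi1 : IntervalIntegrable (fun x : ℝ => (s + 2*x)⁻¹) volume 0 1 := by
      apply ContinuousOn.intervalIntegrable
      apply ContinuousOn.inv₀ (by fun_prop)
      intro x hx
      rw [Set.uIcc_of_le zero_le_one] at hx
      have := hx.1
      positivity
    have hi2 : IntervalIntegrable (fun x : ℝ => (s + 2*(1-x))⁻¹) volume 0 1 := by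
      apply ContinuousOn.intervalIntegrable
      apply ContinuousOn.inv₀ (by fun_prop)
      intro x hx
      rw [Set.uIcc_of_le zero_le_one] at hx
      have h1 := hx.2
      have : (0:ℝ) ≤ 1 - x := by linarith
      positivity
    rw [intervalIntegral.integral_const_mul, intervalIntegral.integral_add hi1 hi2,
      integral_inv_linear s 2 hs0 two_pos, integral_inv_linear' s 2 hs0 two_pos]
    ring
  -- numeric conclusion
  have ht : Real.log (1 / lam) = -Real.log lam := by
    rw [one_div, Real.log_inv]
  have hls : Real.log s = Real.log lam / 2 := Real.log_sqrt hl0.le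
  have ht2 : Real.log 2 ≤ Real.log (1 / lam) := by
    apply Real.log_le_log (by norm_num)
    rw [le_div_iff₀ hl0]
    linarith
  have hlog2 : (0:ℝ) < Real.log 2 := Real.log_pos (by norm_num)
  have hlog3 : Real.log (s + 2) ≤ 2 * Real.log 2 := by
    calc Real.log (s + 2) ≤ Real.log 4 := by
          apply Real.log_le_log (by linarith)
          linarith
    _ = 2 * Real.log 2 := by
          rw [show (4:ℝ) = 2 ^ 2 by norm_num, Real.log_pow]
          push_cast; ring
  have hsqrt2 : Real.sqrt 2 ≤ 3 / 2 := by
    nlinarith [Real.sq_sqrt (by norm_num : (0:ℝ) ≤ 2), Real.sqrt_nonneg 2]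
  have hlogs_le : Real.log s ≤ 0 := Real.log_nonpos hs0.le hs1
  set t := Real.log (1 / lam) with htdef
  have ht0 : 0 < t := lt_of_lt_of_le hlog2 ht2
  have hlogsval : Real.log s = -(t / 2) := by rw [hls, ht]; ring
  have hnum : 2 * Real.sqrt 2 * (Real.log (s + 2) - Real.log s) ≤ 10 * t := by
    have h6 : Real.log (s + 2) - Real.log s ≤ 2 * t + t / 2 := by
      rw [hlogsval]
      have : 2 * Real.log 2 ≤ 2 * t := by linarith
      linarith
    have h7 : 0 ≤ Real.log (s + 2) - Real.log s := by
      have : (0:ℝ) ≤ Real.log (s + 2) := Real.log_nonneg (by linarith)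
      linarith
    nlinarith [Real.sqrt_nonneg 2]
  calc ∫ z in Q, F lam z ≤ ∫ z in Q, G lam z := step1
  _ = ∫ x in Set.Icc (0:ℝ) 1, 2 * ((B lam x)⁻¹ - (B lam x + 2)⁻¹) := step2'
  _ ≤ ∫ x in Set.Icc (0:ℝ) 1,
        2 * Real.sqrt 2 * ((s + 2*x)⁻¹ + (s + 2*(1-x))⁻¹) := step3
  _ = 2 * Real.sqrt 2 * (Real.log (s + 2) - Real.log s) := step4
  _ ≤ 10 * t := hnum

end Ilam

namespace Ilam
variable {lam : ℝ}

def P (lam : ℝ) (z : ℝ × ℝ) : ℝ := (lam + ((π * z.1) ^ 2 + (π * z.2) ^ 2))⁻¹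

lemma P_den_pos (hl0 : 0 < lam) (z : ℝ × ℝ) :
    0 < lam + ((π * z.1) ^ 2 + (π * z.2) ^ 2) := by positivity

lemma P_cont (hl0 : 0 < lam) : Continuous (P lam) := by
  apply Continuous.inv₀
  · fun_prop
  · exact fun z => (P_den_pos hl0 z).ne'

lemma P_int (hl0 : 0 < lam) : IntegrableOn (P lam) Q :=
  (P_cont hl0).continuousOn.integrableOn_compact hQc

lemma P_le_F (hl0 : 0 < lam) (z : ℝ × ℝ) : P lam z ≤ F lam z := by
  rw [P, F]
  apply inv_anti₀ (F_den_pos hl0 z)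
  have h1 := Real.sin_sq_le_sq (x := π * z.1)
  have h2 := Real.sin_sq_le_sq (x := π * z.2)
  linarith

lemma P_nonneg (hl0 : 0 < lam) (z : ℝ × ℝ) : 0 ≤ P lam z :=
  inv_nonneg.2 (P_den_pos hl0 z).le

set_option maxHeartbeats 1000000 in
lemma lower (hl0 : 0 < lam) (hl2 : lam ≤ 1 / 2) :
    (1 / 50) * Real.log (1 / lam) ≤ ∫ z in Q, F lam z := by
  obtain ⟨s, hsdef⟩ : ∃ v : ℝ, v = Real.sqrt lam := ⟨_, rfl⟩
  have hs0 : 0 < s := by rw [hsdef]; exact Real.sqrt_pos.2 hl0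
  have hs2 : s ^ 2 = lam := by rw [hsdef]; exact Real.sq_sqrt hl0.le
  have hpi := Real.pi_pos
  have hpi3 : (3:ℝ) < π := by
    have := Real.pi_gt_d6; linarith
  have hpi315 : π < 3.15 := Real.pi_lt_d2
  have step1 : ∫ z in Q, P lam z ≤ ∫ z in Q, F lam z :=
    setIntegral_mono_on (P_int hl0) (F_int hl0) hQm (fun z _ => P_le_F hl0 z)
  have hPint' : IntegrableOn (P lam) (Set.Icc (0:ℝ) 1 ×ˢ Set.Icc (0:ℝ) 1)
      ((volume : Measure ℝ).prod volume) := P_int hl0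
  have step2 : ∫ z in Q, P lam z
      = ∫ x in Set.Icc (0:ℝ) 1, ∫ y in Set.Icc (0:ℝ) 1, P lam (x, y) := by
    rw [Q]
    exact setIntegral_prod _ hPint'
  -- inner lower bound
  have hinner : ∀ x ∈ Set.Icc (0:ℝ) 1,
      (2 / (5 * π)) * (s + π * x)⁻¹ ≤ ∫ y in Set.Icc (0:ℝ) 1, P lam (x, y) := by
    intro x hx
    obtain ⟨hx0, hx1⟩ := hx
    obtain ⟨A, hAdef⟩ : ∃ v : ℝ, v = lam + (π * x) ^ 2 := ⟨_, rfl⟩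
    have hA : 0 < A := by rw [hAdef]; positivity
    have hsqA : Real.sqrt A ^ 2 = A := Real.sq_sqrt hA.le
    have hsqA0 : 0 < Real.sqrt A := Real.sqrt_pos.2 hA
    obtain ⟨r, hrdef⟩ : ∃ v : ℝ, v = Real.sqrt A / (2 * π) := ⟨_, rfl⟩
    have hr0 : 0 < r := by rw [hrdef]; positivity
    have hr1 : r ≤ 1 := by
      rw [hrdef, div_le_one (by positivity)]
      have hx2 : x ^ 2 ≤ 1 := by nlinarith
      have h1 : A ≤ (2 * π) ^ 2 := by
        nlinarith [mul_le_mul_of_nonneg_left hx2 (sq_nonneg π)]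
      calc Real.sqrt A ≤ Real.sqrt ((2 * π) ^ 2) := Real.sqrt_le_sqrt h1
      _ = 2 * π := Real.sqrt_sq (by positivity)
    have hr2 : r ^ 2 = A / (4 * π ^ 2) := by
      rw [hrdef, div_pow, hsqA]; ring_nf
    -- restrict to Icc 0 r
    have hmono : ∫ y in Set.Icc (0:ℝ) r, P lam (x, y)
        ≤ ∫ y in Set.Icc (0:ℝ) 1, P lam (x, y) := by
      apply setIntegral_mono_set
      · exact ((P_cont hl0).comp (Continuous.prodMk_right x)).continuousOn.integrableOn_compact
          isCompact_Icc
      · exact MeasureTheory.ae_of_all _ (fun y => P_nonneg hl0 (x, y))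
      · exact HasSubset.Subset.eventuallyLE (Set.Icc_subset_Icc le_rfl hr1)
    have hconst : ∀ y ∈ Set.Icc (0:ℝ) r, (A + A / 4)⁻¹ ≤ P lam (x, y) := by
      intro y hy
      obtain ⟨hy0, hyr⟩ := hy
      rw [P]
      apply inv_anti₀ (P_den_pos hl0 (x, y))
      have hy2 : y ^ 2 ≤ r ^ 2 := by nlinarith
      have hkey : (π * y) ^ 2 ≤ A / 4 := by
        rw [hr2] at hy2
        have h5 := mul_le_mul_of_nonneg_left hy2 (sq_nonneg π)
        have heq : π ^ 2 * (A / (4 * π ^ 2)) = A / 4 := by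
          field_simp
        nlinarith [heq, h5]
      show lam + ((π * x) ^ 2 + (π * y) ^ 2) ≤ A + A / 4
      linarith [hAdef.ge, hAdef.le]
    have hconst_int : ∫ y in Set.Icc (0:ℝ) r, P lam (x, y)
        ≥ ∫ y in Set.Icc (0:ℝ) r, (fun _ : ℝ => (A + A / 4)⁻¹) y := by
      apply setIntegral_mono_on
      · exact integrableOn_const (by rw [Real.volume_Icc]; exact ENNReal.ofReal_ne_top)
      · exact ((P_cont hl0).comp (Continuous.prodMk_right x)).continuousOn.integrableOn_compact
          isCompact_Icc
      · exact measurableSet_Icc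
      · exact hconst
    have hconst_val : ∫ y in Set.Icc (0:ℝ) r, (fun _ : ℝ => (A + A / 4)⁻¹) y
        = r * (A + A / 4)⁻¹ := by
      rw [MeasureTheory.setIntegral_const, measureReal_def, Real.volume_Icc, smul_eq_mul,
        ENNReal.toReal_ofReal (by linarith)]
      ring_nf
    have hval : (2 / (5 * π)) * (s + π * x)⁻¹ ≤ r * (A + A / 4)⁻¹ := by
      have h1 : r * (A + A / 4)⁻¹ = (2 / (5 * π)) * (Real.sqrt A)⁻¹ := by
        have ms : Real.sqrt A * Real.sqrt A = A := Real.mul_self_sqrt hA.le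
        have hA5 : A + A / 4 ≠ 0 := by positivity
        rw [hrdef]
        field_simp
        linear_combination 20 * ms
      rw [h1]
      have h2 : Real.sqrt A ≤ s + π * x := by
        have : A ≤ (s + π * x) ^ 2 := by
          rw [hAdef]
          nlinarith [mul_nonneg (mul_nonneg hs0.le hpi.le) hx0]
        calc Real.sqrt A ≤ Real.sqrt ((s + π * x) ^ 2) := Real.sqrt_le_sqrt this
        _ = s + π * x := Real.sqrt_sq (by positivity)
      have h3 : (s + π * x)⁻¹ ≤ (Real.sqrt A)⁻¹ := inv_anti₀ hsqA0 h2
      have h4 : (0:ℝ) < 2 / (5 * π) := by positivity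
      nlinarith
    calc (2 / (5 * π)) * (s + π * x)⁻¹ ≤ r * (A + A / 4)⁻¹ := hval
    _ = ∫ y in Set.Icc (0:ℝ) r, (fun _ : ℝ => (A + A / 4)⁻¹) y := hconst_val.symm
    _ ≤ ∫ y in Set.Icc (0:ℝ) r, P lam (x, y) := hconst_int
    _ ≤ ∫ y in Set.Icc (0:ℝ) 1, P lam (x, y) := hmono
  -- outer bound
  have hinner_int : IntegrableOn (fun x => ∫ y in Set.Icc (0:ℝ) 1, P lam (x, y))
      (Set.Icc (0:ℝ) 1) := by
    have h2 : Integrable (P lam)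
        ((volume.restrict (Set.Icc (0:ℝ) 1)).prod (volume.restrict (Set.Icc (0:ℝ) 1))) := by
      rw [Measure.prod_restrict]; exact hPint'
    exact h2.integral_prod_left
  have step3 : ∫ x in Set.Icc (0:ℝ) 1, (2 / (5 * π)) * (s + π * x)⁻¹
      ≤ ∫ x in Set.Icc (0:ℝ) 1, ∫ y in Set.Icc (0:ℝ) 1, P lam (x, y) := by
    apply setIntegral_mono_on
    · apply ContinuousOn.integrableOn_compact isCompact_Icc
      apply ContinuousOn.mul continuousOn_const
      apply ContinuousOn.inv₀ (by fun_prop)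
      intro x hx
      have := hx.1
      positivity
    · exact hinner_int
    · exact measurableSet_Icc
    · exact hinner
  have step4 : ∫ x in Set.Icc (0:ℝ) 1, (2 / (5 * π)) * (s + π * x)⁻¹
      = (2 / (5 * π)) * ((Real.log (s + π) - Real.log s) / π) := by
    rw [MeasureTheory.integral_Icc_eq_integral_Ioc,
      ← intervalIntegral.integral_of_le zero_le_one,
      intervalIntegral.integral_const_mul, integral_inv_linear s π hs0 hpi]
  have ht : Real.log (1 / lam) = -Real.log lam := by rw [one_div, Real.log_inv]
  have hls : Real.log s = Real.log lam / 2 := by rw [hsdef]; exact Real.log_sqrt hl0.le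
  have ht0 : 0 ≤ Real.log (1 / lam) := by
    rw [ht]
    have : Real.log lam ≤ 0 := Real.log_nonpos hl0.le (by linarith)
    linarith
  have hlogpi : 1 ≤ Real.log (s + π) := by
    rw [Real.le_log_iff_exp_le (by positivity)]
    have h1 := Real.exp_one_lt_d9
    linarith
  have hlogsval : Real.log s = -(Real.log (1 / lam) / 2) := by
    rw [hls, ht]; ring
  have hfin : (1/50) * Real.log (1 / lam)
      ≤ (2 / (5 * π)) * ((Real.log (s + π) - Real.log s) / π) := by
    have hL : 1 + Real.log (1 / lam) / 2 ≤ Real.log (s + π) - Real.log s := by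
      rw [hlogsval]; linarith
    have hexp : (2 / (5 * π)) * ((Real.log (s + π) - Real.log s) / π)
        = 2 * (Real.log (s + π) - Real.log s) * (5 * π ^ 2)⁻¹ := by
      have hpne : π ≠ 0 := hpi.ne'
      field_simp
    rw [hexp]
    have hinv : (50:ℝ)⁻¹ ≤ (5 * π ^ 2)⁻¹ := inv_anti₀ (by positivity) (by nlinarith)
    have ha0 : 0 ≤ 2 * (Real.log (s + π) - Real.log s) := by linarith
    have hmul := mul_le_mul_of_nonneg_left hinv ha0
    linarith [hmul, hL]
  calc (1/50) * Real.log (1 / lam)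
      ≤ (2 / (5 * π)) * ((Real.log (s + π) - Real.log s) / π) := hfin
  _ = ∫ x in Set.Icc (0:ℝ) 1, (2 / (5 * π)) * (s + π * x)⁻¹ := step4.symm
  _ ≤ ∫ x in Set.Icc (0:ℝ) 1, ∫ y in Set.Icc (0:ℝ) 1, P lam (x, y) := step3
  _ = ∫ z in Q, P lam z := step2.symm
  _ ≤ ∫ z in Q, F lam z := step1

end Ilam

/-- Two-sided logarithmic asymptotics of `I_λ = ∫_{[0,1]²} (λ + ζ₂(p))⁻¹ dp` in
dimension two: there are constants `0 < c ≤ C` with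
`c log(1/λ) ≤ I_λ ≤ C log(1/λ)` for all `λ ∈ (0,1/2]`. -/
theorem I_lambda_two_dim_asymptotics :
    ∃ c C : ℝ, 0 < c ∧ c ≤ C ∧
      ∀ lam : ℝ, lam ∈ Set.Ioc (0 : ℝ) (1 / 2) →
        (c * Real.log (1 / lam) ≤ ∫ p in cube 2, (lam + zeta 2 p)⁻¹) ∧
        ((∫ p in cube 2, (lam + zeta 2 p)⁻¹) ≤ C * Real.log (1 / lam)) := by
  refine ⟨1/50, 10, by norm_num, by norm_num, ?_⟩
  intro lam hlam
  obtain ⟨hl0, hl2⟩ := hlam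
  have key : ∫ p in cube 2, (lam + zeta 2 p)⁻¹ = ∫ z in Ilam.Q, Ilam.F lam z := by
    have h1 : ∀ p : Fin 2 → ℝ, (lam + zeta 2 p)⁻¹ = Ilam.F lam (p 0, p 1) := by
      intro p
      rw [Ilam.zeta_two]
      rfl
    simp only [h1]
    exact Ilam.integral_cube (Ilam.F lam)
  rw [key]
  exact ⟨Ilam.lower hl0 hl2, Ilam.upper hl0 hl2⟩

end
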